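/- (Extremal covariant POVMs with nontrivial stability groups, irreducible case) For each i ∈ I let G_i be a subgroup of G, and let 𝒟 be the convex set of families A : I → (H →L[ℂ] H) such that every A i is positive semidefinite, A i ∘ U h = U h ∘ A i for all h ∈ G_i, and L(A) = id_H. If the representation U is irreducible, in the sense that every operator commuting with all U g is a scalar multiple of the identity, then every extreme point A of 𝒟 has at most one nonzero component: A i = 0 for all but at most one index i ∈ I. -/

import Mathlib

open ContinuousLinearMap

set_option maxHeartbeats 1000000

open ContinuousLinearMap

section Aux

variable {H : Type*} [NormedAddCommGroup H] [InnerProductSpace ℂ H] [CompleteSpace H]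

local notation "⟪" x ", " y "⟫" => @inner ℂ _ _ x y

lemma aux_isPositive_sum {ι : Type*} (s : Finset ι) (f : ι → H →L[ℂ] H)
    (h : ∀ i ∈ s, (f i).IsPositive) : (∑ i ∈ s, f i).IsPositive :=
  Finset.sum_induction f IsPositive (fun _ _ ha hb => ha.add hb) isPositive_zero h

lemma aux_isPositive_smul {T : H →L[ℂ] H} (hT : T.IsPositive) {r : ℝ} (hr : 0 ≤ r) :
    (((r : ℂ)) • T).IsPositive := by
  rw [isPositive_iff_complex] at hT ⊢
  intro x
  obtain ⟨h1, h2⟩ := hT x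
  set a := RCLike.re ⟪T x, x⟫ with ha
  have key : ⟪(((r : ℂ)) • T) x, x⟫ = (r : ℂ) * ((a : ℝ) : ℂ) := by
    conv_lhs => rw [smul_apply, inner_smul_left, Complex.conj_ofReal, ← h1]
  rw [key]
  constructor
  · norm_cast
  · have h3 : ((r : ℂ)) * ((a : ℝ) : ℂ) = ((r * a : ℝ) : ℂ) := by norm_cast
    rw [h3]
    simpa using mul_nonneg hr h2

omit [CompleteSpace H] in
lemma aux_real_smul (r : ℝ) (T : H →L[ℂ] H) : r • T = ((r : ℂ)) • T := rfl

end Aux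


/-- The linear map `L(A) = (1/|G|) · Σ_{i ∈ I} Σ_{g ∈ G} (U g) ∘ (A i) ∘ (U g)†`
associated to a family of operators `A : I → (H →L[ℂ] H)`. -/
noncomputable def Lmap {H : Type*} [NormedAddCommGroup H] [InnerProductSpace ℂ H]
    [FiniteDimensional ℂ H] {G : Type*} [Group G] [Fintype G] {I : Type*} [Fintype I]
    (U : G → (H →L[ℂ] H)) (A : I → (H →L[ℂ] H)) : H →L[ℂ] H :=
  (Fintype.card G : ℂ)⁻¹ •
    ∑ i : I, ∑ g : G, U g ∘L A i ∘L ContinuousLinearMap.adjoint (U g)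

/-- The convex set `𝒞` of block operators corresponding to covariant POVMs with
outcome space `I × G`: families `A` with every `A i` positive semidefinite and `L(A) = 1`. -/
def covSet {H : Type*} [NormedAddCommGroup H] [InnerProductSpace ℂ H]
    [FiniteDimensional ℂ H] {G : Type*} [Group G] [Fintype G] {I : Type*} [Fintype I]
    (U : G → (H →L[ℂ] H)) : Set (I → (H →L[ℂ] H)) :=
  {A | (∀ i, (A i).IsPositive) ∧ Lmap U A = 1}

/-- The convex set `𝒟` of block operators corresponding to covariant POVMs on the outcome
space `∪_i G / G_i`: families `A` with every `A i` positive semidefinite, commuting with the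
stability subgroup `G_i`, and `L(A) = 1`. -/
def covSetStab {H : Type*} [NormedAddCommGroup H] [InnerProductSpace ℂ H]
    [FiniteDimensional ℂ H] {G : Type*} [Group G] [Fintype G] {I : Type*} [Fintype I]
    (U : G → (H →L[ℂ] H)) (Gi : I → Subgroup G) : Set (I → (H →L[ℂ] H)) :=
  {A | (∀ i, (A i).IsPositive) ∧
    (∀ i, ∀ h ∈ Gi i, A i ∘L U h = U h ∘L A i) ∧ Lmap U A = 1}

/-- (Extremal covariant POVMs with nontrivial stability groups, irreducible case) If `U` is
irreducible, then every extreme point `A` of `𝒟` has at most one nonzero component. -/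
theorem extremePoint_stab_of_irreducible
    {H : Type*} [NormedAddCommGroup H] [InnerProductSpace ℂ H] [FiniteDimensional ℂ H]
    [Nontrivial H]
    {G : Type*} [Group G] [Fintype G] {I : Type*} [Fintype I] [Nonempty I]
    (U : G → (H →L[ℂ] H))
    (hU1 : ∀ g, U g ∘L ContinuousLinearMap.adjoint (U g) = 1)
    (hU2 : ∀ g, ContinuousLinearMap.adjoint (U g) ∘L U g = 1)
    (hUm : ∀ g h, U (g * h) = U g ∘L U h)
    (hirr : ∀ C : H →L[ℂ] H, (∀ g, C ∘L U g = U g ∘L C) → ∃ c : ℂ, C = c • 1)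
    (Gi : I → Subgroup G)
    (A : I → (H →L[ℂ] H)) (hA : A ∈ covSetStab U Gi)
    (hext : A ∈ Set.extremePoints ℝ (covSetStab U Gi)) :
    ∃ i₀ : I, ∀ i ≠ i₀, A i = 0 := by
  classical
  obtain ⟨hpos, hcomm, hL⟩ := hA
  by_contra hcon
  push_neg at hcon
  obtain ⟨x0, hx0⟩ := exists_ne (0 : H)
  -- basic facts
  have hone : U 1 = 1 := by
    have h := hUm 1 1
    rw [mul_one] at h
    have h2 := congrArg (fun T => ContinuousLinearMap.adjoint (U 1) ∘L T) h
    simp only [← comp_assoc, hU2 1] at h2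
    rw [one_def, id_comp] at h2
    exact h2.symm
  have hn0 : (Fintype.card G : ℂ) ≠ 0 := by
    exact_mod_cast Nat.cast_ne_zero.mpr Fintype.card_ne_zero
  set S : I → (H →L[ℂ] H) := fun i => ∑ g, U g ∘L A i ∘L ContinuousLinearMap.adjoint (U g)
    with hSdef
  set F : I → (H →L[ℂ] H) := fun i => (Fintype.card G : ℂ)⁻¹ • S i with hFdef
  have hterm_pos : ∀ i (g : G), (U g ∘L A i ∘L ContinuousLinearMap.adjoint (U g)).IsPositive :=
    fun i g => (hpos i).conj_adjoint (U g)
  have hSpos : ∀ i, (S i).IsPositive := fun i =>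
    aux_isPositive_sum _ _ (fun g _ => hterm_pos i g)
  have hFpos : ∀ i, (F i).IsPositive := by
    intro i
    have : ((((Fintype.card G : ℝ)⁻¹ : ℝ)) : ℂ) = (Fintype.card G : ℂ)⁻¹ := by push_cast; ring
    rw [hFdef]
    simp only
    rw [← this]
    exact aux_isPositive_smul (hSpos i) (by positivity)
  -- commutation of S i with all U h
  have hScomm : ∀ i h, S i ∘L U h = U h ∘L S i := by
    intro i h
    rw [hSdef]
    simp only [finset_sum_comp, comp_finset_sum]
    have hinv : U h⁻¹ = ContinuousLinearMap.adjoint (U h) := by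
      have hh1 : U h⁻¹ ∘L U h = 1 := by rw [← hUm, inv_mul_cancel, hone]
      calc U h⁻¹ = U h⁻¹ ∘L (U h ∘L ContinuousLinearMap.adjoint (U h)) := by
            rw [hU1 h, one_def, comp_id]
        _ = (U h⁻¹ ∘L U h) ∘L ContinuousLinearMap.adjoint (U h) := by
            rw [comp_assoc]
        _ = ContinuousLinearMap.adjoint (U h) := by rw [hh1, one_def, id_comp]
    refine Fintype.sum_equiv (Equiv.mulLeft h⁻¹) _ _ ?_
    intro x
    simp only [Equiv.coe_mulLeft]
    rw [hUm h⁻¹ x, adjoint_comp, hinv, adjoint_adjoint]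
    simp only [comp_assoc]
    rw [← comp_assoc (U h) (ContinuousLinearMap.adjoint (U h)), hU1 h, one_def, id_comp]
  have hFcomm : ∀ i h, F i ∘L U h = U h ∘L F i := by
    intro i h
    rw [hFdef]
    simp only [smul_comp, comp_smul, hScomm i h]
  -- scalars
  have hci : ∀ i, ∃ r : ℝ, 0 ≤ r ∧ F i = ((r : ℝ) : ℂ) • 1 := by
    intro i
    obtain ⟨c, hc⟩ := hirr (F i) (hFcomm i)
    have hsa : IsSelfAdjoint (c • (1 : H →L[ℂ] H)) := hc ▸ (hFpos i).isSelfAdjoint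
    have hcc : (starRingEnd ℂ) c = c := by
      have h1 : (starRingEnd ℂ) c • (1 : H →L[ℂ] H) = c • 1 := by
        have h0 := hsa
        rw [IsSelfAdjoint, star_smul, star_one] at h0
        exact h0
      have h2 := congrArg (fun T : H →L[ℂ] H => T x0) h1
      simp only [smul_apply, one_apply_eq_self] at h2
      have h3 : ((starRingEnd ℂ) c - c) • x0 = 0 := by rw [sub_smul, h2, sub_self]
      rcases smul_eq_zero.mp h3 with h | h
      · exact sub_eq_zero.mp h
      · exact absurd h hx0
    have hre : ((c.re : ℝ) : ℂ) = c := Complex.conj_eq_iff_re.mp hcc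
    refine ⟨c.re, ?_, by rw [hre]; exact hc⟩
    have hp := (hFpos i).re_inner_nonneg_left x0
    rw [hc] at hp
    rw [smul_apply, one_apply_eq_self, inner_smul_left, hcc,
      inner_self_eq_norm_sq_to_K (𝕜 := ℂ)] at hp
    have hx2 : (0 : ℝ) < ‖x0‖ ^ 2 := pow_pos (norm_pos_iff.mpr hx0) 2
    simp only [RCLike.mul_re, ← RCLike.ofReal_pow, RCLike.ofReal_re, RCLike.ofReal_im,
      mul_zero, sub_zero] at hp
    have hrc : RCLike.re c = c.re := rfl
    rw [hrc] at hp
    nlinarith [hp, hx2]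
  choose r hr0 hF using hci
  -- r i = 0 → A i = 0
  have hzero : ∀ i, r i = 0 → A i = 0 := by
    intro i hri
    have hF0 : F i = 0 := by rw [hF i, hri]; simp
    have hS0 : S i = 0 := by
      have := hF0
      rw [hFdef] at this
      simp only at this
      rcases smul_eq_zero.mp this with h | h
      · exact absurd (inv_eq_zero.mp h) hn0
      · exact h
    have hinner : ∀ x : H, (inner ℂ ((A i) x) x : ℂ) = 0 := by
      intro x
      have h1 : RCLike.re (inner ℂ ((S i) x) x : ℂ) = 0 := by
        rw [hS0]; simp
      rw [hSdef] at h1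
      simp only [sum_apply, sum_inner, map_sum] at h1
      have h2 := (Finset.sum_eq_zero_iff_of_nonneg
        (fun g _ => (hterm_pos i g).re_inner_nonneg_left x)).mp h1 1 (Finset.mem_univ 1)
      have hadj1 : ContinuousLinearMap.adjoint (U 1) = 1 := by
        rw [← star_eq_adjoint, hone, star_one]
      rw [hadj1, hone] at h2
      simp only [comp_apply, one_apply_eq_self] at h2
      have h3 : (inner ℂ ((A i) x) x : ℂ) = ((RCLike.re (inner ℂ ((A i) x) x : ℂ) : ℝ) : ℂ) :=
        ((isPositive_iff_complex (A i)).mp (hpos i) x).1.symm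
      rw [h3, h2]
      simp
    have h4 : (A i : H →ₗ[ℂ] H) = 0 := (inner_map_self_eq_zero _).mp hinner
    ext x
    have := LinearMap.ext_iff.mp h4 x
    simpa using this
  -- sum of F = 1 and sum of r = 1
  have hLS : ∑ i, F i = 1 := by
    rw [hFdef]
    simp only
    rw [← Finset.smul_sum, ← hSdef]
    exact hL
  have hrsum : ∑ i, r i = 1 := by
    have h1 : (((∑ i, r i : ℝ)) : ℂ) • (1 : H →L[ℂ] H) = 1 := by
      push_cast
      rw [Finset.sum_smul, Finset.sum_congr rfl fun i _ => (hF i).symm]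
      exact hLS
    have h2 := congrArg (fun T : H →L[ℂ] H => T x0) h1
    simp only [smul_apply, one_apply_eq_self] at h2
    have h3 : ((((∑ i, r i : ℝ)) : ℂ) - 1) • x0 = 0 := by
      rw [sub_smul, one_smul, h2, sub_self]
    rcases smul_eq_zero.mp h3 with h | h
    · have := sub_eq_zero.mp h
      exact_mod_cast this
    · exact absurd h hx0
  -- two distinct nonzero components
  obtain ⟨i, -, hAi⟩ := hcon (Classical.arbitrary I)
  obtain ⟨j, hji, hAj⟩ := hcon i
  have hij : i ≠ j := hji.symm
  have hri0 : 0 < r i := (hr0 i).lt_of_ne (fun h => hAi (hzero i h.symm))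
  have hrj0 : 0 < r j := (hr0 j).lt_of_ne (fun h => hAj (hzero j h.symm))
  have hle : r i + r j ≤ 1 := by
    rw [← hrsum, ← Finset.sum_pair hij]
    exact Finset.sum_le_sum_of_subset_of_nonneg (Finset.subset_univ _) (fun k _ _ => hr0 k)
  have hri1 : r i < 1 := by linarith
  -- the two perturbations
  set B : I → (H →L[ℂ] H) :=
    fun k => if k = i then ((((r i)⁻¹ : ℝ)) : ℂ) • A i else 0 with hB
  set E : I → (H →L[ℂ] H) :=
    fun k => if k = i then 0 else ((((1 - r i)⁻¹ : ℝ)) : ℂ) • A k with hE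
  have hBpos : ∀ k, (B k).IsPositive := by
    intro k
    by_cases hk : k = i
    · subst hk
      simp only [hB, if_pos rfl]
      exact aux_isPositive_smul (hpos k) (inv_nonneg.mpr hri0.le)
    · simp only [hB, if_neg hk]
      exact isPositive_zero
  have hEpos : ∀ k, (E k).IsPositive := by
    intro k
    by_cases hk : k = i
    · simp only [hE, if_pos hk]
      exact isPositive_zero
    · simp only [hE, if_neg hk]
      exact aux_isPositive_smul (hpos k) (inv_nonneg.mpr (by linarith))
  have hBcomm : ∀ k, ∀ h ∈ Gi k, B k ∘L U h = U h ∘L B k := by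
    intro k h hh
    by_cases hk : k = i
    · subst hk
      simp only [hB, if_pos rfl, smul_comp, comp_smul, hcomm k h hh]
    · simp only [hB, if_neg hk, zero_comp, comp_zero]
  have hEcomm : ∀ k, ∀ h ∈ Gi k, E k ∘L U h = U h ∘L E k := by
    intro k h hh
    by_cases hk : k = i
    · simp only [hE, if_pos hk, zero_comp, comp_zero]
    · simp only [hE, if_neg hk, smul_comp, comp_smul, hcomm k h hh]
  have hLB : Lmap U B = 1 := by
    rw [Lmap]
    have h1 : ∀ k : I, (∑ g : G, U g ∘L B k ∘L ContinuousLinearMap.adjoint (U g))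
        = if k = i then ((((r i)⁻¹ : ℝ)) : ℂ) • S i else 0 := by
      intro k
      by_cases hk : k = i
      · subst hk
        rw [if_pos rfl, hSdef]
        simp only
        rw [Finset.smul_sum]
        refine Finset.sum_congr rfl fun g _ => ?_
        simp only [hB, if_pos rfl, smul_comp, comp_smul]
      · rw [if_neg hk]
        simp [hB, if_neg hk]
    rw [Finset.sum_congr rfl fun k _ => h1 k, Finset.sum_ite_eq' Finset.univ i,
      if_pos (Finset.mem_univ i)]
    have hFi : (Fintype.card G : ℂ)⁻¹ • S i = F i := rfl
    rw [smul_comm, hFi, hF i, smul_smul, ← Complex.ofReal_mul,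
      inv_mul_cancel₀ (ne_of_gt hri0)]
    simp
  have hLE : Lmap U E = 1 := by
    rw [Lmap]
    have h1 : ∀ k : I, (∑ g : G, U g ∘L E k ∘L ContinuousLinearMap.adjoint (U g))
        = if k = i then 0 else ((((1 - r i)⁻¹ : ℝ)) : ℂ) • S k := by
      intro k
      by_cases hk : k = i
      · rw [if_pos hk]
        simp [hE, if_pos hk]
      · rw [if_neg hk, hSdef]
        simp only
        rw [Finset.smul_sum]
        refine Finset.sum_congr rfl fun g _ => ?_
        simp only [hE, if_neg hk, smul_comp, comp_smul]
    rw [Finset.sum_congr rfl fun k _ => h1 k]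
    have h2 : (∑ k : I, S k) - S i = ∑ k ∈ Finset.univ.erase i, S k := by
      rw [← Finset.sum_erase_add Finset.univ S (Finset.mem_univ i)]
      simp
    have h3 : ∑ k : I, (if k = i then (0 : H →L[ℂ] H)
        else ((((1 - r i)⁻¹ : ℝ)) : ℂ) • S k)
        = ((((1 - r i)⁻¹ : ℝ)) : ℂ) • ((∑ k : I, S k) - S i) := by
      rw [h2, Finset.smul_sum,
        ← Finset.sum_erase_add Finset.univ _ (Finset.mem_univ i), if_pos rfl, add_zero]
      exact Finset.sum_congr rfl fun k hk => if_neg (Finset.ne_of_mem_erase hk)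
    rw [h3, smul_comm, smul_sub]
    have h4 : (Fintype.card G : ℂ)⁻¹ • (∑ k : I, S k) = 1 := by
      rw [Finset.smul_sum]
      exact hLS
    have h5 : (Fintype.card G : ℂ)⁻¹ • S i = F i := rfl
    rw [h4, h5, hF i]
    have h6 : (1 : H →L[ℂ] H) - ((r i : ℝ) : ℂ) • 1 = (((1 - r i : ℝ)) : ℂ) • 1 := by
      push_cast
      rw [sub_smul, one_smul]
    rw [h6, smul_smul, ← Complex.ofReal_mul,
      inv_mul_cancel₀ (by linarith : (1 : ℝ) - r i ≠ 0)]
    simp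
  have hBmem : B ∈ covSetStab U Gi := ⟨hBpos, hBcomm, hLB⟩
  have hEmem : E ∈ covSetStab U Gi := ⟨hEpos, hEcomm, hLE⟩
  have hseg : A ∈ openSegment ℝ B E := by
    refine ⟨r i, 1 - r i, hri0, by linarith, by ring, ?_⟩
    funext k
    simp only [Pi.add_apply, Pi.smul_apply]
    by_cases hk : k = i
    · subst hk
      simp only [hB, hE, if_pos rfl, smul_zero, add_zero]
      rw [aux_real_smul, smul_smul, ← Complex.ofReal_mul,
        mul_inv_cancel₀ (ne_of_gt hri0)]
      simp
    · simp only [hB, hE, if_neg hk, smul_zero, zero_add]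
      rw [aux_real_smul, smul_smul, ← Complex.ofReal_mul,
        mul_inv_cancel₀ (by linarith : (1 : ℝ) - r i ≠ 0)]
      simp
  obtain hBA := hext.2 hBmem hEmem hseg
  apply hAj
  rw [← hBA]
  simp [hB, hji]
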